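/- Let (J_n, X_n) be a Markov chain on X × ℝ (real-valued, possibly negative rewards) with X finite, U_0 = min{n ≥ 1 : J_n = 0} a.s. finite from every initial state, and E_i|X_1|^d < ∞ for all i ∈ X. Then the accumulated reward W_0 = Σ_{n=1}^{U_0} X_n satisfies E_i|W_0|^d < ∞ for all i ∈ X. -/

import Mathlib

open MeasureTheory ENNReal

/-- Prepend one step to a trajectory of a Markov renewal process with real-valued
increments. The path `ω` encodes `ω n = (J_{n+1}, X_{n+1})`. -/
def consStep {X : Type*} (q : X × ℝ) (ω : ℕ → X × ℝ) : ℕ → X × ℝ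
  | 0 => q
  | n + 1 => ω n

/-- Accumulated (real-valued) reward `W₀ = ∑_{n=1}^{U₀} X_n` up to the first hitting time
`U₀ = min{n ≥ 1 : J_n = 0}` (in the path encoding `ω n = (J_{n+1}, X_{n+1})`). -/
noncomputable def hitReward {X : Type*} [Zero X] (ω : ℕ → X × ℝ) : ℝ :=
  ∑ n ∈ Finset.range (sInf {n | (ω n).1 = 0} + 1), (ω n).2

/-!
Because the state space is finite and `0` is reached almost surely from every state, the Markov
property makes the tails `P_i(U₀ > n)` decay geometrically, uniformly in `i`. On `{U₀ > n}` the
reward `X_{n+1}` has conditional `d`-th moment at most `M = max_j E_j |X₁|^d`, so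
`‖1_{U₀ > n} X_{n+1}‖_d ≤ (M · P_i(U₀ > n))^{1/d}`, and Minkowski's inequality bounds `‖W₀‖_d` by a
convergent geometric series.
-/

theorem ENNReal.inv_two_pow_div_le {N : ℕ} (hN : 0 < N) (n : ℕ) :
    (2⁻¹ : ℝ≥0∞) ^ (n / N) ≤ 2 * (2⁻¹ ^ (1 / N : ℝ)) ^ n := by
  have hexp : (n : ℝ) / N ≤ ((n / N + 1 : ℕ) : ℝ) := by
    rw [div_le_iff₀ (by exact_mod_cast hN)]
    exact_mod_cast (Nat.lt_div_mul_add hN).le.trans_eq (by ring)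
  calc (2⁻¹ : ℝ≥0∞) ^ (n / N) = 2 * 2⁻¹ ^ (n / N + 1) := by
        rw [pow_succ', ← mul_assoc, ENNReal.mul_inv_cancel two_ne_zero ofNat_ne_top, one_mul]
    _ ≤ 2 * 2⁻¹ ^ ((n : ℝ) / N) := by
        rw [← ENNReal.rpow_natCast]
        gcongr 2 * ?_
        exact ENNReal.rpow_le_rpow_of_exponent_ge (by norm_num) hexp
    _ = 2 * (2⁻¹ ^ (1 / N : ℝ)) ^ n := by
        rw [← ENNReal.rpow_natCast, ← ENNReal.rpow_mul, one_div_mul_eq_div]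

section Minkowski

variable {α : Type*} [MeasurableSpace α] {μ : Measure α}

theorem lintegral_tsum_rpow_le {f : ℕ → α → ℝ≥0∞} (hf : ∀ n, Measurable (f n)) {p : ℝ}
    (hp : 1 ≤ p) :
    ∫⁻ a, (∑' n, f n a) ^ p ∂μ ≤ (∑' n, (∫⁻ a, f n a ^ p ∂μ) ^ (1 / p)) ^ p := by
  have hp0 : 0 < p := zero_lt_one.trans_le hp
  have hpartial : ∀ K, ∫⁻ a, (∑ n ∈ Finset.range K, f n a) ^ p ∂μ ≤
      (∑' n, (∫⁻ a, f n a ^ p ∂μ) ^ (1 / p)) ^ p := fun K => by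
    have hmink := eLpNorm'_sum_le (μ := μ) (s := Finset.range K)
      (fun n _ => (hf n).aestronglyMeasurable) hp
    simp only [eLpNorm'_eq_lintegral_enorm, enorm_eq_self, Finset.sum_apply] at hmink
    rw [← ENNReal.rpow_le_rpow_iff (one_div_pos.mpr hp0), ← ENNReal.rpow_mul,
      mul_one_div_cancel hp0.ne', ENNReal.rpow_one]
    exact hmink.trans (ENNReal.sum_le_tsum _)
  have hmono : Monotone fun K a => (∑ n ∈ Finset.range K, f n a) ^ p := fun K L hKL a =>
    ENNReal.rpow_le_rpow (Finset.sum_le_sum_of_subset (Finset.range_subset_range.mpr hKL)) hp0.le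
  calc ∫⁻ a, (∑' n, f n a) ^ p ∂μ
      = ∫⁻ a, ⨆ K, (∑ n ∈ Finset.range K, f n a) ^ p ∂μ := by
        refine lintegral_congr fun a => ?_
        rw [ENNReal.tsum_eq_iSup_nat]
        exact Monotone.map_iSup_of_continuousAt (ENNReal.continuous_rpow_const.continuousAt)
          (ENNReal.monotone_rpow_of_nonneg hp0.le) (ENNReal.zero_rpow_of_pos hp0)
    _ = ⨆ K, ∫⁻ a, (∑ n ∈ Finset.range K, f n a) ^ p ∂μ :=
        lintegral_iSup (fun K => (Finset.measurable_sum _ fun n _ => hf n).pow_const p) hmono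
    _ ≤ _ := iSup_le hpartial

theorem lintegral_tsum_rpow_ne_top_of_le_geometric {f : ℕ → α → ℝ≥0∞}
    (hf : ∀ n, Measurable (f n)) {p : ℝ} (hp : 1 ≤ p) {C ρ : ℝ≥0∞} (hC : C ≠ ⊤) (hρ : ρ < 1)
    (hfC : ∀ n, ∫⁻ a, f n a ^ p ∂μ ≤ C * ρ ^ n) :
    ∫⁻ a, (∑' n, f n a) ^ p ∂μ ≠ ⊤ := by
  have hp' : 0 < 1 / p := one_div_pos.mpr (zero_lt_one.trans_le hp)
  have hterm : ∀ n, (∫⁻ a, f n a ^ p ∂μ) ^ (1 / p) ≤ C ^ (1 / p) * (ρ ^ (1 / p)) ^ n := fun n => by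
    calc (∫⁻ a, f n a ^ p ∂μ) ^ (1 / p) ≤ (C * ρ ^ n) ^ (1 / p) :=
          ENNReal.rpow_le_rpow (hfC n) hp'.le
      _ = C ^ (1 / p) * (ρ ^ (1 / p)) ^ n := by
          rw [ENNReal.mul_rpow_of_nonneg _ _ hp'.le, ← ENNReal.rpow_natCast, ← ENNReal.rpow_natCast,
            ← ENNReal.rpow_mul, ← ENNReal.rpow_mul, mul_comm (n : ℝ)]
  have hsum : ∑' n, C ^ (1 / p) * (ρ ^ (1 / p)) ^ n ≠ ⊤ := by
    rw [ENNReal.tsum_mul_left, ENNReal.tsum_geometric]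
    exact ENNReal.mul_ne_top (ENNReal.rpow_ne_top_of_nonneg hp'.le hC)
      (ENNReal.inv_ne_top.mpr (tsub_pos_of_lt (ENNReal.rpow_lt_one hρ hp')).ne')
  refine ne_top_of_le_ne_top ?_ (lintegral_tsum_rpow_le hf hp)
  exact ENNReal.rpow_ne_top_of_nonneg (zero_le_one.trans hp)
    (ne_top_of_le_ne_top hsum (ENNReal.tsum_le_tsum hterm))

end Minkowski

theorem measurable_measure_prodMk_left_comp {ι α β : Type*} [MeasurableSpace ι] [Countable ι]
    [MeasurableSingletonClass ι] [MeasurableSpace α] [MeasurableSpace β] (ν : ι → Measure β)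
    [∀ i, SFinite (ν i)] {f : α → ι} (hf : Measurable f) {s : Set (α × β)}
    (hs : MeasurableSet s) : Measurable fun a => ν (f a) (Prod.mk a ⁻¹' s) := by
  have : Measurable fun p : α × ι => ν p.2 (Prod.mk p.1 ⁻¹' s) :=
    measurable_from_prod_countable_left fun j => measurable_measure_prodMk_left (ν := ν j) hs
  exact this.comp (measurable_id.prodMk hf)

section Paths

variable {X : Type*}

def shiftPath {β : Type*} (n : ℕ) (ω : ℕ → β) : ℕ → β := fun k => ω (k + n)

/-- The event `{U₀ > n}`: none of `J_1, …, J_n` is `0`. -/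
def noHitBefore [Zero X] (n : ℕ) : Set (ℕ → X × ℝ) := {ω | ∀ k < n, (ω k).1 ≠ 0}

variable [Zero X]

@[simp]
theorem noHitBefore_zero : (noHitBefore 0 : Set (ℕ → X × ℝ)) = Set.univ := by
  ext ω; simp [noHitBefore]

theorem noHitBefore_antitone : Antitone (noHitBefore : ℕ → Set (ℕ → X × ℝ)) :=
  fun _ _ hab _ hω k hk => hω k (hk.trans_le hab)

theorem consStep_mem_noHitBefore_succ {q : X × ℝ} {ω : ℕ → X × ℝ} {n : ℕ} :
    consStep q ω ∈ noHitBefore (n + 1) ↔ q.1 ≠ 0 ∧ ω ∈ noHitBefore n := by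
  refine ⟨fun h => ⟨h 0 n.succ_pos, fun k hk => h (k + 1) (Nat.succ_lt_succ hk)⟩, ?_⟩
  rintro ⟨hq, hω⟩ (_ | k) hk
  exacts [hq, hω k (Nat.lt_of_succ_lt_succ hk)]

theorem noHitBefore_add (n k : ℕ) :
    (noHitBefore (n + k) : Set (ℕ → X × ℝ)) = noHitBefore n ∩ shiftPath n ⁻¹' noHitBefore k := by
  ext ω
  simp only [noHitBefore, shiftPath, Set.mem_inter_iff, Set.mem_preimage, Set.mem_ofPred_eq]
  refine ⟨fun h => ⟨fun j hj => h j (by omega), fun j hj => h (j + n) (by omega)⟩, ?_⟩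
  rintro ⟨h₁, h₂⟩ j hj
  by_cases hjn : j < n
  · exact h₁ j hjn
  · simpa [Nat.sub_add_cancel (not_lt.mp hjn)] using h₂ (j - n) (by omega)

theorem iInter_noHitBefore :
    ⋂ n, (noHitBefore n : Set (ℕ → X × ℝ)) = {ω | ∃ n, (ω n).1 = 0}ᶜ := by
  ext ω
  simp only [noHitBefore, Set.mem_iInter, Set.mem_ofPred_eq, Set.mem_compl_iff, not_exists]
  exact ⟨fun h n => h (n + 1) n n.lt_succ_self, fun h _ k _ => h k⟩

theorem ofReal_abs_hitReward_le_tsum (ω : ℕ → X × ℝ) :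
    ENNReal.ofReal |hitReward ω| ≤
      ∑' n, (noHitBefore n).indicator (fun ω => ENNReal.ofReal |(ω n).2|) ω := by
  set U := sInf {n | (ω n).1 = 0}
  have hmem : ∀ n ∈ Finset.range (U + 1), ω ∈ noHitBefore n := fun n hn k hk hk0 => by
    have := Nat.sInf_le (s := {n | (ω n).1 = 0}) hk0
    have := Finset.mem_range.mp hn
    omega
  calc ENNReal.ofReal |hitReward ω|
      ≤ ENNReal.ofReal (∑ n ∈ Finset.range (U + 1), |(ω n).2|) :=
        ENNReal.ofReal_le_ofReal (Finset.abs_sum_le_sum_abs _ _)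
    _ = ∑ n ∈ Finset.range (U + 1),
          (noHitBefore n).indicator (fun ω => ENNReal.ofReal |(ω n).2|) ω := by
        rw [ENNReal.ofReal_sum_of_nonneg fun n _ => abs_nonneg _]
        exact Finset.sum_congr rfl fun n hn =>
          (Set.indicator_of_mem (hmem n hn) (fun ω => ENNReal.ofReal |(ω n).2|)).symm
    _ ≤ _ := ENNReal.sum_le_tsum _

end Paths

section Measurability

variable {X : Type*} [MeasurableSpace X]

theorem measurable_consStep_uncurry :
    Measurable fun p : (X × ℝ) × (ℕ → X × ℝ) => consStep p.1 p.2 :=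
  measurable_pi_lambda _ fun
    | 0 => measurable_fst
    | k + 1 => (measurable_pi_apply k).comp measurable_snd

theorem measurable_consStep (q : X × ℝ) : Measurable (consStep q) :=
  measurable_consStep_uncurry.comp measurable_prodMk_left

theorem measurable_shiftPath {β : Type*} [MeasurableSpace β] (n : ℕ) :
    Measurable (shiftPath n : (ℕ → β) → ℕ → β) :=
  measurable_pi_lambda _ fun k => measurable_pi_apply (k + n)

variable [MeasurableSingletonClass X] [Zero X]

theorem measurableSet_noHitBefore (n : ℕ) : MeasurableSet (noHitBefore n : Set (ℕ → X × ℝ)) := by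
  have : (noHitBefore n : Set (ℕ → X × ℝ)) = ⋂ k < n, (fun ω => (ω k).1) ⁻¹' {0}ᶜ := by
    ext ω; simp [noHitBefore]
  rw [this]
  exact .biInter (Set.to_countable _) fun k _ =>
    (measurable_fst.comp (measurable_pi_apply k)) (measurableSet_singleton 0).compl

theorem measurableSet_exists_fst_eq_zero : MeasurableSet {ω : ℕ → X × ℝ | ∃ n, (ω n).1 = 0} := by
  simp only [Set.ofPred_exists]
  exact .iUnion fun n => (measurable_fst.comp (measurable_pi_apply n)) (measurableSet_singleton 0)

theorem tendsto_measure_noHitBefore {ν : Measure (ℕ → X × ℝ)} [IsProbabilityMeasure ν]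
    (hhit : ν {ω | ∃ n, (ω n).1 = 0} = 1) :
    Filter.Tendsto (fun n => ν (noHitBefore n)) Filter.atTop (nhds 0) := by
  have h := tendsto_measure_iInter_atTop (μ := ν)
    (fun n => (measurableSet_noHitBefore n).nullMeasurableSet) noHitBefore_antitone
    ⟨0, measure_ne_top _ _⟩
  rwa [iInter_noHitBefore, measure_compl measurableSet_exists_fst_eq_zero (measure_ne_top _ _),
    hhit, measure_univ, tsub_self] at h

end Measurability

section MarkovRenewal

variable {X : Type*} [MeasurableSpace X] [MeasurableSingletonClass X] [Countable X]

def IsMarkovRenewal (Q : X → Measure (X × ℝ)) (μ : X → Measure (ℕ → X × ℝ)) : Prop :=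
  ∀ i A, MeasurableSet A → μ i A = ∫⁻ q, μ q.1 {ω | consStep q ω ∈ A} ∂Q i

theorem measurable_map_consStep (μ : X → Measure (ℕ → X × ℝ)) [∀ i, SFinite (μ i)] :
    Measurable fun q : X × ℝ => (μ q.1).map (consStep q) :=
  Measure.measurable_of_measurable_coe _ fun s hs => by
    simp_rw [Measure.map_apply (measurable_consStep _) hs]
    exact measurable_measure_prodMk_left_comp μ measurable_fst (measurable_consStep_uncurry hs)

namespace IsMarkovRenewal

variable {Q : X → Measure (X × ℝ)} {μ : X → Measure (ℕ → X × ℝ)} (hμ : IsMarkovRenewal Q μ)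
include hμ

theorem eq_bind [∀ i, SFinite (μ i)] (i : X) :
    μ i = (Q i).bind fun q => (μ q.1).map (consStep q) := by
  ext A hA
  rw [Measure.bind_apply hA (measurable_map_consStep μ).aemeasurable, hμ i A hA]
  exact lintegral_congr fun q => (Measure.map_apply (measurable_consStep q) hA).symm

theorem lintegral_eq [∀ i, SFinite (μ i)] {F : (ℕ → X × ℝ) → ℝ≥0∞} (hF : Measurable F)
    (i : X) : ∫⁻ ω, F ω ∂μ i = ∫⁻ q, ∫⁻ ω, F (consStep q ω) ∂μ q.1 ∂Q i := by
  rw [hμ.eq_bind i, Measure.lintegral_bind (measurable_map_consStep μ).aemeasurable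
    hF.aemeasurable]
  exact lintegral_congr fun q => lintegral_map hF (measurable_consStep q)

variable [Zero X]

theorem setLIntegral_noHitBefore_succ [∀ i, SFinite (μ i)] {F : (ℕ → X × ℝ) → ℝ≥0∞}
    (hF : Measurable F) (n : ℕ) (i : X) :
    ∫⁻ ω in noHitBefore (n + 1), F ω ∂μ i =
      ∫⁻ q in {q | q.1 ≠ 0}, ∫⁻ ω in noHitBefore n, F (consStep q ω) ∂μ q.1 ∂Q i := by
  have hne : MeasurableSet {q : X × ℝ | q.1 ≠ 0} := measurable_fst (measurableSet_singleton 0).compl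
  rw [← lintegral_indicator (measurableSet_noHitBefore _),
    hμ.lintegral_eq (hF.indicator (measurableSet_noHitBefore _)), ← lintegral_indicator hne]
  refine lintegral_congr fun q => ?_
  classical
  by_cases hq : q.1 = 0
  · simp [consStep_mem_noHitBefore_succ, hq]
  · rw [Set.indicator_of_mem hq, ← lintegral_indicator (measurableSet_noHitBefore n)]
    simp only [Set.indicator_apply, consStep_mem_noHitBefore_succ, ne_eq, hq, not_false_eq_true,
      true_and]

theorem measure_noHitBefore_succ [∀ i, SFinite (μ i)] (n : ℕ) (i : X) :
    μ i (noHitBefore (n + 1)) = ∫⁻ q in {q | q.1 ≠ 0}, μ q.1 (noHitBefore n) ∂Q i := by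
  simpa using hμ.setLIntegral_noHitBefore_succ (F := fun _ => 1) measurable_const n i

variable [∀ i, IsProbabilityMeasure (μ i)]

theorem setLIntegral_noHitBefore_comp_shiftPath_le {G : (ℕ → X × ℝ) → ℝ≥0∞}
    (hG : Measurable G) (n : ℕ) (i : X) :
    ∫⁻ ω in noHitBefore n, G (shiftPath n ω) ∂μ i ≤
      (⨆ j, ∫⁻ ω, G ω ∂μ j) * μ i (noHitBefore n) := by
  set C := ⨆ j, ∫⁻ ω, G ω ∂μ j
  induction n generalizing i with
  | zero =>
    rw [noHitBefore_zero, Measure.restrict_univ, measure_univ, mul_one]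
    exact le_iSup (fun j => ∫⁻ ω, G ω ∂μ j) i
  | succ n ih =>
    calc ∫⁻ ω in noHitBefore (n + 1), G (shiftPath (n + 1) ω) ∂μ i
        = ∫⁻ q in {q | q.1 ≠ 0}, ∫⁻ ω in noHitBefore n, G (shiftPath n ω) ∂μ q.1 ∂Q i :=
          hμ.setLIntegral_noHitBefore_succ (hG.comp (measurable_shiftPath _)) n i
      _ ≤ ∫⁻ q in {q | q.1 ≠ 0}, C * μ q.1 (noHitBefore n) ∂Q i :=
          lintegral_mono fun q => ih q.1
      _ = C * μ i (noHitBefore (n + 1)) := by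
          rw [lintegral_const_mul (f := fun q : X × ℝ => μ q.1 (noHitBefore n)) _
            ((measurable_of_countable fun j => μ j (noHitBefore n)).comp measurable_fst),
            hμ.measure_noHitBefore_succ]

theorem measure_noHitBefore_add_le (n k : ℕ) (i : X) :
    μ i (noHitBefore (n + k)) ≤ (⨆ j, μ j (noHitBefore k)) * μ i (noHitBefore n) := by
  have hk := measurableSet_noHitBefore (X := X) k
  have hpre : MeasurableSet (shiftPath n ⁻¹' noHitBefore k : Set (ℕ → X × ℝ)) :=
    measurable_shiftPath n hk
  have h := hμ.setLIntegral_noHitBefore_comp_shiftPath_le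
    (G := (noHitBefore k).indicator 1) (measurable_one.indicator hk) n i
  simp only [lintegral_indicator_one hk] at h
  calc μ i (noHitBefore (n + k))
      = ∫⁻ ω in noHitBefore n, (noHitBefore k).indicator 1 (shiftPath n ω) ∂μ i := by
        rw [noHitBefore_add, Set.inter_comm, ← Measure.restrict_apply hpre,
          ← lintegral_indicator_one hpre]
        rfl
    _ ≤ _ := h

theorem setLIntegral_noHitBefore_le {g : X × ℝ → ℝ≥0∞} (hg : Measurable g) (n : ℕ) (i : X) :
    ∫⁻ ω in noHitBefore n, g (ω n) ∂μ i ≤ (⨆ j, ∫⁻ q, g q ∂Q j) * μ i (noHitBefore n) := by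
  have hg0 : Measurable fun ω : ℕ → X × ℝ => g (ω 0) := hg.comp (measurable_pi_apply 0)
  have h := hμ.setLIntegral_noHitBefore_comp_shiftPath_le hg0 n i
  have hstep : ∀ j, ∫⁻ ω, g (ω 0) ∂μ j = ∫⁻ q, g q ∂Q j := fun j => by
    simp [hμ.lintegral_eq hg0, consStep]
  simpa [shiftPath, hstep] using h

theorem lintegral_indicator_noHitBefore_rpow_le {g : X × ℝ → ℝ≥0∞} (hg : Measurable g) {p : ℝ}
    (hp : 0 < p) (n : ℕ) (i : X) :
    ∫⁻ ω, (noHitBefore n).indicator (fun ω => g (ω n)) ω ^ p ∂μ i ≤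
      (⨆ j, ∫⁻ q, g q ^ p ∂Q j) * μ i (noHitBefore n) := by
  calc ∫⁻ ω, (noHitBefore n).indicator (fun ω => g (ω n)) ω ^ p ∂μ i
      = ∫⁻ ω in noHitBefore n, g (ω n) ^ p ∂μ i := by
        rw [← lintegral_indicator (measurableSet_noHitBefore n)]
        refine lintegral_congr fun ω => ?_
        by_cases hω : ω ∈ noHitBefore n <;> simp [hω, hp]
    _ ≤ _ := hμ.setLIntegral_noHitBefore_le (hg.pow_const p) n i

theorem measure_noHitBefore_mul_le {r : ℝ≥0∞} {N : ℕ} (hN : ∀ j, μ j (noHitBefore N) ≤ r)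
    (k : ℕ) (i : X) : μ i (noHitBefore (k * N)) ≤ r ^ k := by
  induction k generalizing i with
  | zero => simp
  | succ k ih =>
    calc μ i (noHitBefore ((k + 1) * N))
        ≤ (⨆ j, μ j (noHitBefore N)) * μ i (noHitBefore (k * N)) := by
          rw [Nat.succ_mul]; exact hμ.measure_noHitBefore_add_le _ _ i
      _ ≤ r * r ^ k := mul_le_mul' (iSup_le hN) (ih i)
      _ = r ^ (k + 1) := (pow_succ' r k).symm

theorem exists_measure_noHitBefore_le_geometric [Finite X]
    (hhit : ∀ i, μ i {ω | ∃ n, (ω n).1 = 0} = 1) :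
    ∃ ρ < 1, ∀ i n, μ i (noHitBefore n) ≤ 2 * ρ ^ n := by
  obtain ⟨N, hN, hN0⟩ := ((Filter.eventually_all.2 fun i =>
    (tendsto_measure_noHitBefore (hhit i)).eventually_le_const (by norm_num : (0 : ℝ≥0∞) < 2⁻¹)).and
    (Filter.eventually_gt_atTop 0)).exists
  refine ⟨2⁻¹ ^ (1 / N : ℝ), ENNReal.rpow_lt_one (by norm_num) (by positivity), fun i n => ?_⟩
  calc μ i (noHitBefore n) ≤ μ i (noHitBefore (n / N * N)) :=
        measure_mono (noHitBefore_antitone (Nat.div_mul_le_self n N))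
    _ ≤ 2⁻¹ ^ (n / N) := hμ.measure_noHitBefore_mul_le hN _ i
    _ ≤ 2 * (2⁻¹ ^ (1 / N : ℝ)) ^ n := inv_two_pow_div_le hN0 n

end IsMarkovRenewal

end MarkovRenewal

theorem dth_abs_moment_real_reward_finite_general {m : ℕ} (d : ℕ)
    (Q : Fin (m + 1) → Measure (Fin (m + 1) × ℝ))
    (μ : Fin (m + 1) → Measure (ℕ → Fin (m + 1) × ℝ))
    (hprob : ∀ i, IsProbabilityMeasure (μ i))
    (hMRP : ∀ (i : Fin (m + 1)) (A : Set (ℕ → Fin (m + 1) × ℝ)), MeasurableSet A →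
      μ i A = ∫⁻ q, μ q.1 {ω | consStep q ω ∈ A} ∂ Q i)
    (hhit : ∀ i, μ i {ω | ∃ n, (ω n).1 = 0} = 1)
    (hmom : ∀ i, ∫⁻ q, (ENNReal.ofReal |q.2|) ^ d ∂ Q i ≠ ⊤) :
    ∀ i, ∫⁻ ω, (ENNReal.ofReal |hitReward ω|) ^ d ∂ μ i ≠ ⊤ := by
  intro i
  obtain rfl | hd := Nat.eq_zero_or_pos d
  · simp
  have hμ : IsMarkovRenewal Q μ := hMRP
  obtain ⟨ρ, hρ, hdecay⟩ := hμ.exists_measure_noHitBefore_le_geometric hhit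
  set M := ⨆ j, ∫⁻ q, ENNReal.ofReal |q.2| ^ d ∂Q j
  have hreward : Measurable fun q : Fin (m + 1) × ℝ => ENNReal.ofReal |q.2| :=
    ENNReal.measurable_ofReal.comp measurable_snd.abs
  set e : ℕ → (ℕ → Fin (m + 1) × ℝ) → ℝ≥0∞ :=
    fun n => (noHitBefore n).indicator fun ω => ENNReal.ofReal |(ω n).2|
  have he : ∀ n, Measurable (e n) := fun n =>
    (hreward.comp (measurable_pi_apply n)).indicator (measurableSet_noHitBefore n)
  have hbound : ∀ n, ∫⁻ ω, e n ω ^ (d : ℝ) ∂μ i ≤ M * 2 * ρ ^ n := fun n => calc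
    ∫⁻ ω, e n ω ^ (d : ℝ) ∂μ i ≤ M * μ i (noHitBefore n) := by
        simpa [M] using hμ.lintegral_indicator_noHitBefore_rpow_le hreward
          (p := d) (by positivity) n i
    _ ≤ M * (2 * ρ ^ n) := by gcongr; exact hdecay i n
    _ = M * 2 * ρ ^ n := (mul_assoc _ _ _).symm
  refine ne_top_of_le_ne_top (lintegral_tsum_rpow_ne_top_of_le_geometric he
    (by exact_mod_cast hd) (mul_ne_top (iSup_ne_top hmom) ofNat_ne_top) hρ hbound)
    (lintegral_mono fun ω => ?_)
  rw [← ENNReal.rpow_natCast]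
  exact ENNReal.rpow_le_rpow (ofReal_abs_hitReward_le_tsum ω) (Nat.cast_nonneg d)

/-- For a Markov renewal process with real-valued (possibly negative)
increments on a finite state space, if `U₀` is a.s. finite from every initial state and
`E_i|X₁|^d < ∞` for all `i`, then the accumulated reward `W₀ = ∑_{n=1}^{U₀} X_n` satisfies
`E_i|W₀|^d < ∞` for all `i`. -/
theorem dth_abs_moment_real_reward_finite {m : ℕ} (d : ℕ)
    (Q : Fin (m + 1) → Measure (Fin (m + 1) × ℝ))
    (hQ : ∀ i, IsProbabilityMeasure (Q i))
    (μ : Fin (m + 1) → Measure (ℕ → Fin (m + 1) × ℝ))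
    (hprob : ∀ i, IsProbabilityMeasure (μ i))
    (hMRP : ∀ (i : Fin (m + 1)) (A : Set (ℕ → Fin (m + 1) × ℝ)), MeasurableSet A →
      μ i A = ∫⁻ q, μ q.1 {ω | consStep q ω ∈ A} ∂ Q i)
    (hhit : ∀ i, μ i {ω | ∃ n, (ω n).1 = 0} = 1)
    (hmom : ∀ i, ∫⁻ q, (ENNReal.ofReal |q.2|) ^ d ∂ Q i ≠ ⊤) :
    ∀ i, ∫⁻ ω, (ENNReal.ofReal |hitReward ω|) ^ d ∂ μ i ≠ ⊤ :=
  dth_abs_moment_real_reward_finite_general d Q μ hprob hMRP hhit hmom
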